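/- For 1 < p < ∞, the Bellman function B(F, f, A, v) = (p/(p-1))^p · F − (p^p/(p-1)) · f^p/(A + (p-1)v)^(p-1) is concave on the convex domain D = {(F,f,A,v) : F ≥ 0, f ≥ 0, A > 0, v > 0, v ≥ A, f^p ≤ F v^(p-1)}. -/

import Mathlib

/-!
Writing `s = A + (p - 1) v`, the nonlinear term `f ^ p / s ^ (p - 1) = s * (f / s) ^ p` is the
perspective of the convex function `t ↦ t ^ p`, hence jointly convex in `(f, s)`. So `B` is a
linear function minus a nonnegative multiple of a convex function of a linear image of `x`, and
`D` is cut out by two half-spaces and the sublevel set `{f ^ p / v ^ (p - 1) ≤ F}` of a convex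
function.
-/

open Set

section Perspective

variable {𝕜 E β : Type*} [Field 𝕜] [LinearOrder 𝕜] [IsStrictOrderedRing 𝕜]
  [AddCommGroup E] [Module 𝕜 E] [AddCommGroup β] [PartialOrder β]
  [Module 𝕜 β] [PosSMulMono 𝕜 β] {s : Set E} {g : E → β}

theorem ConvexOn.perspective (hg : ConvexOn 𝕜 s g) :
    ConvexOn 𝕜 {x : E × 𝕜 | 0 < x.2 ∧ x.2⁻¹ • x.1 ∈ s} (fun x => x.2 • g (x.2⁻¹ • x.1)) := by
  have comb : ∀ ⦃x₁ x₂ : E⦄ ⦃t₁ t₂ a b : 𝕜⦄, 0 < t₁ → 0 < t₂ → t₁⁻¹ • x₁ ∈ s → t₂⁻¹ • x₂ ∈ s →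
      0 ≤ a → 0 ≤ b → a + b = 1 →
      0 < a * t₁ + b * t₂ ∧
      (a * t₁ + b * t₂)⁻¹ • (a • x₁ + b • x₂) ∈ s ∧
      (a * t₁ + b * t₂) • g ((a * t₁ + b * t₂)⁻¹ • (a • x₁ + b • x₂)) ≤
        a • t₁ • g (t₁⁻¹ • x₁) + b • t₂ • g (t₂⁻¹ • x₂) := by
    intro x₁ x₂ t₁ t₂ a b ht₁ ht₂ hx₁ hx₂ ha hb hab
    set t := a * t₁ + b * t₂
    have ht : 0 < t := convex_Ioi (0 : 𝕜) ht₁ ht₂ ha hb hab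
    -- `t⁻¹ • (a • x₁ + b • x₂)` is the convex combination of `t₁⁻¹ • x₁` and `t₂⁻¹ • x₂`
    -- with weights `a t₁ / t` and `b t₂ / t`.
    have hw : a * t₁ / t + b * t₂ / t = 1 := by rw [← add_div, div_self ht.ne']
    have hcomb : (a * t₁ / t) • t₁⁻¹ • x₁ + (b * t₂ / t) • t₂⁻¹ • x₂ = t⁻¹ • (a • x₁ + b • x₂) := by
      simp only [smul_smul, smul_add]
      congr 2 <;> field_simp
    have hmem := hg.1 hx₁ hx₂ (by positivity) (by positivity) hw
    have hle := hg.2 hx₁ hx₂ (by positivity : 0 ≤ a * t₁ / t) (by positivity : 0 ≤ b * t₂ / t) hw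
    rw [hcomb] at hmem hle
    refine ⟨ht, hmem, ?_⟩
    calc t • g (t⁻¹ • (a • x₁ + b • x₂))
        ≤ t • ((a * t₁ / t) • g (t₁⁻¹ • x₁) + (b * t₂ / t) • g (t₂⁻¹ • x₂)) :=
          smul_le_smul_of_nonneg_left hle ht.le
      _ = a • t₁ • g (t₁⁻¹ • x₁) + b • t₂ • g (t₂⁻¹ • x₂) := by
          simp only [smul_add, smul_smul]
          congr 2 <;> field_simp
  refine ⟨?_, ?_⟩
  · rintro ⟨x₁, t₁⟩ ⟨ht₁, hx₁⟩ ⟨x₂, t₂⟩ ⟨ht₂, hx₂⟩ a b ha hb hab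
    obtain ⟨ht, hmem, -⟩ := comb ht₁ ht₂ hx₁ hx₂ ha hb hab
    exact ⟨ht, hmem⟩
  · rintro ⟨x₁, t₁⟩ ⟨ht₁, hx₁⟩ ⟨x₂, t₂⟩ ⟨ht₂, hx₂⟩ a b ha hb hab
    exact (comb ht₁ ht₂ hx₁ hx₂ ha hb hab).2.2

end Perspective

open Real

noncomputable def rpowPerspective (p : ℝ) (y : ℝ × ℝ) : ℝ := y.1 ^ p / y.2 ^ (p - 1)

theorem convexOn_rpowPerspective {p : ℝ} (hp : 1 ≤ p) :
    ConvexOn ℝ (Ici 0 ×ˢ Ioi 0) (rpowPerspective p) := by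
  have hdom : {y : ℝ × ℝ | 0 < y.2 ∧ y.2⁻¹ • y.1 ∈ Ici 0} = Ici 0 ×ˢ Ioi 0 := by
    ext ⟨f, t⟩
    simp only [mem_ofPred_eq, mem_prod, mem_Ici, mem_Ioi, smul_eq_mul]
    constructor
    · rintro ⟨ht, hf⟩
      exact ⟨(mul_nonneg_iff_of_pos_left (inv_pos.2 ht)).1 hf, ht⟩
    · rintro ⟨hf, ht⟩
      exact ⟨ht, by positivity⟩
  refine (hdom ▸ (convexOn_rpow hp).perspective).congr ?_
  rintro ⟨f, t⟩ ⟨hf, ht⟩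
  simp only [rpowPerspective, smul_eq_mul, inv_mul_eq_div]
  rw [div_rpow hf ht.le, rpow_sub_one ht.ne']
  field_simp

@[simps]
def weightedCoords (a b : ℝ) : ℝ × ℝ × ℝ × ℝ →ₗ[ℝ] ℝ × ℝ where
  toFun x := (x.2.1, a * x.2.2.1 + b * x.2.2.2)
  map_add' x y := by simp only [Prod.fst_add, Prod.snd_add, Prod.mk_add_mk]; ring_nf
  map_smul' c x := by
    simp only [Prod.smul_fst, Prod.smul_snd, smul_eq_mul, RingHom.id_apply, Prod.smul_mk]; ring_nf

def bellmanDomain (p : ℝ) : Set (ℝ × ℝ × ℝ × ℝ) :=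
  {x | 0 ≤ x.1 ∧ 0 ≤ x.2.1 ∧ 0 < x.2.2.1 ∧ 0 < x.2.2.2 ∧ x.2.2.1 ≤ x.2.2.2 ∧
    x.2.1 ^ p ≤ x.1 * x.2.2.2 ^ (p - 1)}

theorem bellmanDomain_eq (p : ℝ) :
    bellmanDomain p = {x | 0 < x.2.2.1} ∩ {x | x.2.2.1 - x.2.2.2 ≤ 0} ∩
      {x ∈ weightedCoords 0 1 ⁻¹' (Ici 0 ×ˢ Ioi 0) |
        rpowPerspective p (weightedCoords 0 1 x) - x.1 ≤ 0} := by
  ext ⟨F, f, A, v⟩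
  simp only [bellmanDomain, rpowPerspective, weightedCoords_apply, mem_inter_iff, mem_ofPred_eq,
    mem_preimage, mem_prod, mem_Ici, mem_Ioi, zero_mul, one_mul, zero_add, sub_nonpos]
  constructor
  · rintro ⟨-, hf, hA, hv, hAv, hfF⟩
    exact ⟨⟨hA, hAv⟩, ⟨hf, hv⟩, (div_le_iff₀ (by positivity)).2 hfF⟩
  · rintro ⟨⟨hA, hAv⟩, ⟨hf, hv⟩, hfF⟩
    exact ⟨(by positivity : 0 ≤ f ^ p / v ^ (p - 1)).trans hfF, hf, hA, hv, hAv,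
      (div_le_iff₀ (by positivity)).1 hfF⟩

theorem convex_bellmanDomain {p : ℝ} (hp : 1 ≤ p) : Convex ℝ (bellmanDomain p) := by
  let A : ℝ × ℝ × ℝ × ℝ →ₗ[ℝ] ℝ := .fst ℝ ℝ ℝ ∘ₗ .snd ℝ ℝ _ ∘ₗ .snd ℝ ℝ _
  let v : ℝ × ℝ × ℝ × ℝ →ₗ[ℝ] ℝ := .snd ℝ ℝ ℝ ∘ₗ .snd ℝ ℝ _ ∘ₗ .snd ℝ ℝ _
  have hφ := (convexOn_rpowPerspective hp).comp_linearMap (weightedCoords 0 1)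
  rw [bellmanDomain_eq]
  exact ((convex_halfSpace_gt A.isLinear 0).inter (convex_halfSpace_le (A - v).isLinear 0)).inter
    ((hφ.sub (LinearMap.concaveOn (.fst ℝ ℝ _) hφ.1)).convex_le 0)

theorem bellmanDomain_subset_preimage {p : ℝ} (hp : 1 ≤ p) :
    bellmanDomain p ⊆ weightedCoords 1 (p - 1) ⁻¹' (Ici 0 ×ˢ Ioi 0) := by
  rintro ⟨F, f, A, v⟩ ⟨-, hf, hA, hv, -, -⟩
  have hp' : 0 ≤ p - 1 := sub_nonneg.2 hp
  exact ⟨hf, show 0 < 1 * A + (p - 1) * v by positivity⟩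

theorem bellman_concave (p : ℝ) (hp : 1 < p) :
    ConcaveOn ℝ
      {x : ℝ × ℝ × ℝ × ℝ |
        0 ≤ x.1 ∧ 0 ≤ x.2.1 ∧ 0 < x.2.2.1 ∧ 0 < x.2.2.2 ∧ x.2.2.1 ≤ x.2.2.2 ∧
        x.2.1 ^ p ≤ x.1 * x.2.2.2 ^ (p - 1)}
      (fun x : ℝ × ℝ × ℝ × ℝ =>
        (p / (p - 1)) ^ p * x.1 -
          (p ^ p / (p - 1)) * x.2.1 ^ p / (x.2.2.1 + (p - 1) * x.2.2.2) ^ (p - 1)) := by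
  have hD : Convex ℝ (bellmanDomain p) := convex_bellmanDomain hp.le
  have hφ : ConvexOn ℝ (bellmanDomain p) (rpowPerspective p ∘ weightedCoords 1 (p - 1)) :=
    ((convexOn_rpowPerspective hp.le).comp_linearMap _).subset
      (bellmanDomain_subset_preimage hp.le) hD
  have hc : 0 ≤ p ^ p / (p - 1) := div_nonneg (by positivity) (sub_nonneg.2 hp.le)
  refine ((LinearMap.concaveOn ((p / (p - 1)) ^ p • LinearMap.fst ℝ ℝ _) hD).sub
    (hφ.smul hc)).congr fun x _ => ?_
  simp only [Pi.sub_apply, LinearMap.smul_apply, LinearMap.fst_apply, smul_eq_mul,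
    Function.comp_apply, rpowPerspective, weightedCoords_apply, one_mul, mul_div_assoc]
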